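/- arXiv:1302.3201 — 2 statements merged into one kernel-verified Lean document; each statement's English description precedes it below -/
import Mathlib

section
/- For any subset I of Lmc(S), I ⊆ E⁻(E(I)). Moreover, for the ideal I of functions in Lmc(ℝ,+) vanishing on a neighborhood of 0, the inclusion is proper: the function g(x) = min{|x|, 1} lies in E⁻(E(I)) but not in I. -/
open scoped BoundedContinuousFunction
open WeakDual

/-- A semitopological semigroup: multiplication is separately continuous. -/
class SemitopologicalSemigroup (S : Type*) [TopologicalSpace S] [Mul S] : Prop where
  continuous_mul_left : ∀ s : S, Continuous fun x : S => s * x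
  continuous_mul_right : ∀ s : S, Continuous fun x : S => x * s

/-- Left translate `L_s f (x) = f (s x)` as a bounded continuous function. -/
noncomputable def lTrans {S : Type*} [TopologicalSpace S] [Mul S] [SemitopologicalSemigroup S]
    (s : S) (f : S →ᵇ ℂ) : S →ᵇ ℂ :=
  f.compContinuous ⟨fun x => s * x, SemitopologicalSemigroup.continuous_mul_left s⟩

/-- The left multiplicatively continuous functions: `f ∈ Lmc S` iff `T_μ f` is (bounded)
continuous for every character `μ` of `CB(S) = S →ᵇ ℂ` (i.e. every `μ ∈ βS`). -/
def Lmc (S : Type*) [TopologicalSpace S] [Mul S] [SemitopologicalSemigroup S] :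
    Set (S →ᵇ ℂ) :=
  {f | ∀ μ : characterSpace ℂ (S →ᵇ ℂ), Continuous fun s : S => (μ (lTrans s f) : ℂ)}

/-- `E_ε(f) = {x ∈ S : |f x| ≤ ε}`. -/
def Eset {S : Type*} [TopologicalSpace S] (ε : ℝ) (f : S →ᵇ ℂ) : Set S :=
  {x : S | ‖f x‖ ≤ ε}

/-- A zero set of `Lmc S`: `Z(f) = f⁻¹({0})` for some `f ∈ Lmc S`. -/
def IsZeroSet {S : Type*} [TopologicalSpace S] [Mul S] [SemitopologicalSemigroup S]
    (A : Set S) : Prop :=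
  ∃ f ∈ Lmc S, A = {x : S | f x = 0}

/-- `E(I) = {E_ε(f) : f ∈ I, ε > 0}`. -/
def Efam {S : Type*} [TopologicalSpace S] [Mul S] [SemitopologicalSemigroup S]
    (I : Set (S →ᵇ ℂ)) : Set (Set S) :=
  {A | ∃ f ∈ I, ∃ ε : ℝ, 0 < ε ∧ A = Eset ε f}

/-- `E⁻(𝒜) = {f ∈ Lmc S : E_ε(f) ∈ 𝒜 for all ε > 0}`. -/
def Einv {S : Type*} [TopologicalSpace S] [Mul S] [SemitopologicalSemigroup S]
    (𝒜 : Set (Set S)) : Set (S →ᵇ ℂ) :=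
  {f | f ∈ Lmc S ∧ ∀ ε : ℝ, 0 < ε → Eset ε f ∈ 𝒜}

/-- A `z`-filter on `Lmc S`. -/
structure IsZFilter {S : Type*} [TopologicalSpace S] [Mul S] [SemitopologicalSemigroup S]
    (𝒜 : Set (Set S)) : Prop where
  zero_sets : ∀ A ∈ 𝒜, IsZeroSet A
  not_empty_mem : ∅ ∉ 𝒜
  univ_mem : Set.univ ∈ 𝒜
  inter_mem : ∀ A ∈ 𝒜, ∀ B ∈ 𝒜, A ∩ B ∈ 𝒜
  superset_mem : ∀ A ∈ 𝒜, ∀ B : Set S, IsZeroSet B → A ⊆ B → B ∈ 𝒜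

/-- An ideal of the algebra `Lmc S`. -/
structure IsIdealLmc {S : Type*} [TopologicalSpace S] [Mul S] [SemitopologicalSemigroup S]
    (I : Set (S →ᵇ ℂ)) : Prop where
  subset_lmc : I ⊆ Lmc S
  zero_mem : (0 : S →ᵇ ℂ) ∈ I
  add_mem : ∀ f ∈ I, ∀ g ∈ I, f + g ∈ I
  mul_mem : ∀ f ∈ Lmc S, ∀ g ∈ I, f * g ∈ I

/-- A maximal (proper) ideal of `Lmc S`. -/
def IsMaximalIdealLmc {S : Type*} [TopologicalSpace S] [Mul S] [SemitopologicalSemigroup S]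
    (M : Set (S →ᵇ ℂ)) : Prop :=
  IsIdealLmc M ∧ M ≠ Lmc S ∧ ∀ J, IsIdealLmc J → J ≠ Lmc S → M ⊆ J → J = M

/-- An `e`-filter: a `z`-filter with `E(E⁻(𝒜)) = 𝒜`. -/
def IsEFilter {S : Type*} [TopologicalSpace S] [Mul S] [SemitopologicalSemigroup S]
    (𝒜 : Set (Set S)) : Prop :=
  IsZFilter 𝒜 ∧ Efam (Einv 𝒜) = 𝒜

/-- An `e`-ideal: an ideal with `E⁻(E(I)) = I`. -/
def IsEIdeal {S : Type*} [TopologicalSpace S] [Mul S] [SemitopologicalSemigroup S]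
    (I : Set (S →ᵇ ℂ)) : Prop :=
  IsIdealLmc I ∧ Einv (Efam I) = I

/-- An `e`-ultrafilter: a maximal `e`-filter. -/
def IsEUltrafilter {S : Type*} [TopologicalSpace S] [Mul S] [SemitopologicalSemigroup S]
    (p : Set (Set S)) : Prop :=
  IsEFilter p ∧ ∀ q, IsEFilter q → p ⊆ q → q = p

/-- The sum `p + q` of two families of zero sets: `A ∈ p + q` iff `A = E_ε(f)` for some `ε > 0`,
`f ∈ Lmc S`, with `E_δ(q, f) = {x : λ_x⁻¹(E_δ(f)) ∈ q} ∈ p` for all `δ > 0`. -/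
def eAdd {S : Type*} [TopologicalSpace S] [Mul S] [SemitopologicalSemigroup S]
    (p q : Set (Set S)) : Set (Set S) :=
  {A | ∃ ε : ℝ, 0 < ε ∧ ∃ f ∈ Lmc S, A = Eset ε f ∧
    ∀ δ : ℝ, 0 < δ → {x : S | (fun t => x * t) ⁻¹' Eset δ f ∈ q} ∈ p}

/-- The principal `e`-ultrafilter `e(a) = {E_ε(f) : f ∈ Lmc S, f a = 0, ε > 0}`. -/
def ePrinc {S : Type*} [TopologicalSpace S] [Mul S] [SemitopologicalSemigroup S]
    (a : S) : Set (Set S) :=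
  {A | ∃ f ∈ Lmc S, f a = 0 ∧ ∃ ε : ℝ, 0 < ε ∧ A = Eset ε f}

instance : SemitopologicalSemigroup (Multiplicative ℝ) :=
  ⟨fun s => continuous_mul_left s, fun s => continuous_mul_right s⟩

-- psi function
noncomputable def psiR (c : ℝ) (t : ℝ) : ℝ := max (min |t| 1 - c) 0

lemma psiR_lip (c : ℝ) : ∀ a b : ℝ, |psiR c a - psiR c b| ≤ |a - b| := by
  intro a b
  unfold psiR
  calc |max (min |a| 1 - c) 0 - max (min |b| 1 - c) 0|
      ≤ |(min |a| 1 - c) - (min |b| 1 - c)| := abs_max_sub_max_le_abs _ _ _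
    _ = |min |a| 1 - min |b| 1| := by ring_nf
    _ ≤ max |(|a| - |b|)| |1 - 1| := abs_min_sub_min_le_max _ _ _ _
    _ ≤ |a - b| := by
        rw [sub_self, abs_zero]
        exact max_le (abs_abs_sub_abs_le_abs_sub a b) (abs_nonneg _)

lemma psiR_cont (c : ℝ) : Continuous (psiR c) := by
  unfold psiR
  fun_prop

lemma psiR_nonneg (c t : ℝ) : 0 ≤ psiR c t := le_max_right _ _

noncomputable def psiF (c : ℝ) : Multiplicative ℝ →ᵇ ℂ :=
  BoundedContinuousFunction.ofNormedAddCommGroup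
    (fun x => ((psiR c (Multiplicative.toAdd x) : ℝ) : ℂ))
    (Complex.continuous_ofReal.comp ((psiR_cont c).comp continuous_toAdd))
    (1 + |c|)
    (fun x => by
      rw [Complex.norm_real, Real.norm_eq_abs, abs_of_nonneg (psiR_nonneg c _)]
      have := le_max_left (min |Multiplicative.toAdd x| 1 - c) 0
      have h1 : min |Multiplicative.toAdd x| 1 ≤ 1 := min_le_right _ _
      have := neg_abs_le c
      unfold psiR
      refine max_le (by linarith) (by positivity))

lemma psiF_lipTrans (c : ℝ) : LipschitzWith 1 (fun s : Multiplicative ℝ => lTrans s (psiF c)) := by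
  apply LipschitzWith.of_dist_le_mul
  intro s t
  simp only [NNReal.coe_one, one_mul]
  apply BoundedContinuousFunction.dist_le_iff_of_nonempty.mpr
  intro x
  have : ∀ y : Multiplicative ℝ, lTrans y (psiF c) x = ((psiR c (Multiplicative.toAdd y + Multiplicative.toAdd x) : ℝ) : ℂ) := fun y => rfl
  rw [this s, this t, dist_eq_norm, ← Complex.ofReal_sub, Complex.norm_real]
  calc |psiR c (Multiplicative.toAdd s + Multiplicative.toAdd x)
        - psiR c (Multiplicative.toAdd t + Multiplicative.toAdd x)|
      ≤ |(Multiplicative.toAdd s + Multiplicative.toAdd x) - (Multiplicative.toAdd t + Multiplicative.toAdd x)| := by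
        exact psiR_lip c _ _
    _ = dist s t := by
        simp only [add_sub_add_right_eq_sub]
        rfl

lemma psiF_lmc (c : ℝ) : psiF c ∈ Lmc (Multiplicative ℝ) := by
  intro μ
  have h1 : Continuous fun s : Multiplicative ℝ => lTrans s (psiF c) := (psiF_lipTrans c).continuous
  exact (map_continuous (μ : WeakDual ℂ (Multiplicative ℝ →ᵇ ℂ))).comp h1

lemma lTrans_apply {S : Type*} [TopologicalSpace S] [Mul S] [SemitopologicalSemigroup S]
    (s : S) (f : S →ᵇ ℂ) (x : S) : lTrans s f x = f (s * x) := rfl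

lemma lTrans_add {S : Type*} [TopologicalSpace S] [Mul S] [SemitopologicalSemigroup S]
    (s : S) (f g : S →ᵇ ℂ) : lTrans s (f + g) = lTrans s f + lTrans s g := by
  ext x; simp [lTrans_apply]

lemma lTrans_mul {S : Type*} [TopologicalSpace S] [Mul S] [SemitopologicalSemigroup S]
    (s : S) (f g : S →ᵇ ℂ) : lTrans s (f * g) = lTrans s f * lTrans s g := by
  ext x; simp [lTrans_apply]

lemma lTrans_zero {S : Type*} [TopologicalSpace S] [Mul S] [SemitopologicalSemigroup S]
    (s : S) : lTrans s (0 : S →ᵇ ℂ) = 0 := by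
  ext x; simp [lTrans_apply]

lemma Lmc.zero {S : Type*} [TopologicalSpace S] [Mul S] [SemitopologicalSemigroup S] :
    (0 : S →ᵇ ℂ) ∈ Lmc S := by
  intro μ
  simp only [lTrans_zero, map_zero]
  exact continuous_const

lemma Lmc.add {S : Type*} [TopologicalSpace S] [Mul S] [SemitopologicalSemigroup S]
    {f g : S →ᵇ ℂ} (hf : f ∈ Lmc S) (hg : g ∈ Lmc S) : f + g ∈ Lmc S := by
  intro μ
  simp only [lTrans_add, map_add]
  exact (hf μ).add (hg μ)

lemma Lmc.mul {S : Type*} [TopologicalSpace S] [Mul S] [SemitopologicalSemigroup S]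
    {f g : S →ᵇ ℂ} (hf : f ∈ Lmc S) (hg : g ∈ Lmc S) : f * g ∈ Lmc S := by
  intro μ
  simp only [lTrans_mul, map_mul]
  exact (hf μ).mul (hg μ)

lemma psiF_apply (c : ℝ) (x : Multiplicative ℝ) :
    psiF c x = ((psiR c (Multiplicative.toAdd x) : ℝ) : ℂ) := rfl

lemma psiF_norm (c : ℝ) (x : Multiplicative ℝ) :
    ‖psiF c x‖ = psiR c (Multiplicative.toAdd x) := by
  rw [psiF_apply, Complex.norm_real, Real.norm_eq_abs, abs_of_nonneg (psiR_nonneg c _)]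


/-- The ideal of functions in `Lmc(ℝ,+)` vanishing on a neighborhood of `0`
(the identity of `(ℝ,+)` is `(1 : Multiplicative ℝ)`). -/
def vanishNhdIdeal : Set (Multiplicative ℝ →ᵇ ℂ) :=
  {f | f ∈ Lmc (Multiplicative ℝ) ∧
    ∃ U ∈ nhds (1 : Multiplicative ℝ), ∀ x ∈ U, f x = 0}

theorem stmt7 {S : Type*} [TopologicalSpace S] [T2Space S] [Semigroup S]
    [SemitopologicalSemigroup S] (I : Set (S →ᵇ ℂ)) (hI : I ⊆ Lmc S) :
    I ⊆ Einv (Efam I) ∧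
    IsIdealLmc vanishNhdIdeal ∧
    ∃ g : Multiplicative ℝ →ᵇ ℂ,
      (∀ x : Multiplicative ℝ, g x = ((min |Multiplicative.toAdd x| 1 : ℝ) : ℂ)) ∧
      g ∈ Einv (Efam vanishNhdIdeal) ∧ g ∉ vanishNhdIdeal := by
  refine ⟨fun f hf => ⟨hI hf, fun ε hε => ⟨f, hf, ε, hε, rfl⟩⟩, ?_, ?_⟩
  · refine ⟨fun f hf => hf.1, ⟨Lmc.zero, Set.univ, Filter.univ_mem, fun x _ => rfl⟩,
      ?_, ?_⟩
    · rintro f ⟨hf, U, hU, hfU⟩ g ⟨hg, V, hV, hgV⟩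
      refine ⟨Lmc.add hf hg, U ∩ V, Filter.inter_mem hU hV, fun x hx => ?_⟩
      show f x + g x = 0
      rw [hfU x hx.1, hgV x hx.2, add_zero]
    · rintro f hf g ⟨hg, V, hV, hgV⟩
      refine ⟨Lmc.mul hf hg, V, hV, fun x hx => ?_⟩
      show f x * g x = 0
      rw [hgV x hx, mul_zero]
  · refine ⟨psiF 0, fun x => ?_, ⟨psiF_lmc 0, fun ε hε => ?_⟩, ?_⟩
    · rw [psiF_apply]
      congr 1
      unfold psiR
      rw [sub_zero, max_eq_left (le_min (abs_nonneg _) zero_le_one)]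
    · refine ⟨psiF (ε/2), ⟨psiF_lmc _, {x | |Multiplicative.toAdd x| < ε/2}, ?_, ?_⟩,
        ε/2, half_pos hε, ?_⟩
      · refine IsOpen.mem_nhds ?_ ?_
        · exact isOpen_lt ((continuous_abs.comp continuous_toAdd)) continuous_const
        · show |Multiplicative.toAdd (1 : Multiplicative ℝ)| < ε/2
          simpa using half_pos hε
      · intro x hx
        rw [psiF_apply, Complex.ofReal_eq_zero]
        unfold psiR
        rw [max_eq_right]
        have h1 : min |Multiplicative.toAdd x| 1 ≤ |Multiplicative.toAdd x| := min_le_left _ _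
        have h2 : |Multiplicative.toAdd x| < ε/2 := hx
        linarith
      · ext x
        simp only [Eset, Set.mem_setOf_eq, psiF_norm]
        unfold psiR
        rw [sub_zero, max_eq_left (le_min (abs_nonneg _) zero_le_one)]
        constructor
        · intro h
          exact max_le (by linarith) (by linarith)
        · intro h
          have := (le_max_left (min |Multiplicative.toAdd x| 1 - ε/2) 0).trans h
          linarith
    · rintro ⟨-, U, hU, hz⟩
      have hV : (fun t : ℝ => Multiplicative.ofAdd t) ⁻¹' U ∈ nhds (0 : ℝ) := by
        have : Continuous (fun t : ℝ => Multiplicative.ofAdd t) := continuous_ofAdd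
        exact this.continuousAt.preimage_mem_nhds hU
      have hne : ((fun t : ℝ => Multiplicative.ofAdd t) ⁻¹' U ∩ {(0:ℝ)}ᶜ).Nonempty :=
        Filter.nonempty_of_mem
          (Filter.inter_mem (nhdsWithin_le_nhds hV) self_mem_nhdsWithin)
      obtain ⟨t, htU, ht0⟩ := hne
      have := hz (Multiplicative.ofAdd t) htU
      rw [psiF_apply, Complex.ofReal_eq_zero] at this
      have hpos : 0 < psiR 0 t := by
        unfold psiR
        rw [sub_zero, max_eq_left (le_min (abs_nonneg _) zero_le_one)]
        exact lt_min (abs_pos.mpr ht0) one_pos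
      rw [toAdd_ofAdd] at this
      rw [this] at hpos
      exact lt_irrefl 0 hpos
end

section
/- If 𝒜 is a z-filter on Lmc(S), then E(E⁻(𝒜)) is the largest e-filter contained in 𝒜. -/
open scoped BoundedContinuousFunction
open WeakDual

/-!
`E` and `E⁻` behave like a Galois connection: `E(E⁻(𝒜)) ⊆ 𝒜` always, and `I ⊆ E⁻(E(I))` for
`I ⊆ Lmc(S)`. Idempotence of `E ∘ E⁻`, the inclusion in `𝒜` and maximality follow formally.

The substance is that `E(E⁻(𝒜))` is again a `z`-filter. Characters are contractive and the
left translates are `⋆`-homomorphisms, so `Lmc(S)` is a closed `⋆`-subalgebra of `CB(S)`. Such a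
subalgebra is closed under the continuous functional calculus, hence contains `φ ∘ f` for
continuous `φ`, and in particular `max(|f|/ε, |g|/δ)`, whose `E`-sets are the intersections
`E_{σε}(f) ∩ E_{σδ}(g)`.
-/

namespace BoundedContinuousFunction

variable {X : Type*} [TopologicalSpace X]

lemma cfc_apply_of_continuous {φ : ℂ → ℂ} (hφ : Continuous φ) (f : X →ᵇ ℂ) (x : X) :
    cfc φ f x = φ (f x) := by
  let ev : (X →ᵇ ℂ) →⋆ₐ[ℂ] ℂ :=
    (ContinuousMap.evalStarAlgHom ℂ ℂ x).comp (toContinuousMapStarₐ ℂ)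
  have hev : Continuous ev := continuous_eval_const x
  calc cfc φ f x = ev (cfc φ f) := rfl
    _ = cfc φ (ev f) := ev.map_cfc φ f
    _ = φ (f x) := by simpa [ev] using cfc_algebraMap (A := ℂ) (f x) φ

variable {A : StarSubalgebra ℂ (X →ᵇ ℂ)} [IsClosed (A : Set (X →ᵇ ℂ))]

lemma exists_mem_apply_eq_comp {f : X →ᵇ ℂ} (hf : f ∈ A) {φ : ℂ → ℂ} (hφ : Continuous φ) :
    ∃ g ∈ A, ∀ x, g x = φ (f x) :=
  ⟨cfc φ f, cfc_mem φ hf, cfc_apply_of_continuous hφ f⟩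

lemma exists_mem_apply_eq_max_norm {f g : X →ᵇ ℂ} (hf : f ∈ A) (hg : g ∈ A) :
    ∃ m ∈ A, ∀ x, m x = (max ‖f x‖ ‖g x‖ : ℝ) := by
  have hnorm : Continuous fun z : ℂ => (‖z‖ : ℂ) := by fun_prop
  obtain ⟨u, hu, hux⟩ := exists_mem_apply_eq_comp hf hnorm
  obtain ⟨v, hv, hvx⟩ := exists_mem_apply_eq_comp hg hnorm
  obtain ⟨a, ha, hax⟩ := exists_mem_apply_eq_comp (sub_mem hv hu) hnorm
  refine ⟨(2⁻¹ : ℂ) • (u + v + a), A.smul_mem (add_mem (add_mem hu hv) ha) _, fun x => ?_⟩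
  have hvu : ‖(v - u) x‖ = |‖g x‖ - ‖f x‖| := by
    simp [hux, hvx, ← Complex.ofReal_sub, Complex.norm_real]
  rw [smul_apply, add_apply, add_apply, hux, hvx, hax, hvu,
    sup_eq_half_smul_add_add_abs_sub' (𝕜 := ℝ)]
  simp

end BoundedContinuousFunction

section Lmc

variable {S : Type*} [TopologicalSpace S] [Mul S] [SemitopologicalSemigroup S]

noncomputable def lTransStarAlgHom (s : S) : (S →ᵇ ℂ) →⋆ₐ[ℂ] (S →ᵇ ℂ) where
  toFun := lTrans s
  map_one' := rfl
  map_mul' _ _ := rfl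
  map_zero' := rfl
  map_add' _ _ := rfl
  commutes' _ := rfl
  map_star' _ := rfl

lemma lTransStarAlgHom_apply (s : S) (f : S →ᵇ ℂ) : lTransStarAlgHom s f = lTrans s f := rfl

lemma lipschitzWith_one_character_lTrans (μ : characterSpace ℂ (S →ᵇ ℂ)) (s : S) :
    LipschitzWith 1 fun f : S →ᵇ ℂ => μ (lTrans s f) := by
  refine LipschitzWith.of_dist_le_mul fun f g => ?_
  simp only [NNReal.coe_one, one_mul, dist_eq_norm, ← lTransStarAlgHom_apply, ← map_sub]
  have h1 : ‖(1 : S →ᵇ ℂ)‖ ≤ 1 :=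
    (BoundedContinuousFunction.norm_le zero_le_one).2 fun _ => by simp
  calc ‖μ (lTrans s (f - g))‖ ≤ ‖lTrans s (f - g)‖ * ‖(1 : S →ᵇ ℂ)‖ :=
        AlgHom.norm_apply_le_self_mul_norm_one μ _
    _ ≤ ‖lTrans s (f - g)‖ := mul_le_of_le_one_right (norm_nonneg _) h1
    _ ≤ ‖f - g‖ := BoundedContinuousFunction.norm_compContinuous_le _ _

lemma isClosed_Lmc : IsClosed (Lmc S) := by
  have : Lmc S = ⋂ μ : characterSpace ℂ (S →ᵇ ℂ),
      (fun f => UniformFun.ofFun fun s => (μ (lTrans s f) : ℂ)) ⁻¹'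
        {F | Continuous (UniformFun.toFun F)} := by
    ext f; simp [Lmc]
  rw [this]
  exact isClosed_iInter fun μ => IsClosed.preimage
    (UniformFun.lipschitzWith_ofFun_iff.mpr (lipschitzWith_one_character_lTrans μ)).continuous
    (UniformFun.isClosed_setOfPred_continuous S)

variable (S) in
def lmcStarSubalgebra : StarSubalgebra ℂ (S →ᵇ ℂ) where
  carrier := Lmc S
  mul_mem' {f g} hf hg μ := by
    simp only [← lTransStarAlgHom_apply, map_mul]
    exact (hf μ).mul (hg μ)
  add_mem' {f g} hf hg μ := by
    simp only [← lTransStarAlgHom_apply, map_add]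
    exact (hf μ).add (hg μ)
  algebraMap_mem' c μ := by
    simpa only [← lTransStarAlgHom_apply, AlgHomClass.commutes] using continuous_const
  star_mem' {f} hf μ := by
    simpa only [← lTransStarAlgHom_apply, map_star] using (hf μ).star

instance : IsClosed (lmcStarSubalgebra S : Set (S →ᵇ ℂ)) := isClosed_Lmc

end Lmc

lemma Eset_zero {S : Type*} [TopologicalSpace S] {σ : ℝ} (hσ : 0 ≤ σ) :
    Eset σ (0 : S →ᵇ ℂ) = Set.univ := by
  ext x
  simp [Eset, hσ]

lemma Eset_eq_of_apply_eq_ofReal {S : Type*} [TopologicalSpace S] {m : S →ᵇ ℂ} {r : S → ℝ}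
    (hr : ∀ x, 0 ≤ r x) (hm : ∀ x, m x = r x) (σ : ℝ) : Eset σ m = {x | r x ≤ σ} := by
  ext x
  simp [Eset, hm, abs_of_nonneg (hr x)]

section EFilter

variable {S : Type*} [TopologicalSpace S] [Mul S] [SemitopologicalSemigroup S]

lemma Eset_isZeroSet {f : S →ᵇ ℂ} (hf : f ∈ Lmc S) (ε : ℝ) : IsZeroSet (Eset ε f) := by
  obtain ⟨g, hg, hgx⟩ := BoundedContinuousFunction.exists_mem_apply_eq_comp
    (A := lmcStarSubalgebra S) hf (φ := fun z => ((max (‖z‖ - ε) 0 : ℝ) : ℂ)) (by fun_prop)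
  refine ⟨g, hg, ?_⟩
  ext x
  simp [Eset, hgx]

lemma Efam_mono {I J : Set (S →ᵇ ℂ)} (h : I ⊆ J) : Efam I ⊆ Efam J := by
  rintro A ⟨f, hf, ε, hε, rfl⟩
  exact ⟨f, h hf, ε, hε, rfl⟩

lemma Einv_mono {𝒜 ℬ : Set (Set S)} (h : 𝒜 ⊆ ℬ) : Einv 𝒜 ⊆ Einv ℬ :=
  fun _ hf => ⟨hf.1, fun ε hε => h (hf.2 ε hε)⟩

lemma Efam_Einv_subset (𝒜 : Set (Set S)) : Efam (Einv 𝒜) ⊆ 𝒜 := by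
  rintro A ⟨f, hf, ε, hε, rfl⟩
  exact hf.2 ε hε

lemma subset_Einv_Efam {I : Set (S →ᵇ ℂ)} (hI : I ⊆ Lmc S) : I ⊆ Einv (Efam I) :=
  fun f hf => ⟨hI hf, fun ε hε => ⟨f, hf, ε, hε, rfl⟩⟩

lemma Efam_Einv_Efam_Einv (𝒜 : Set (Set S)) :
    Efam (Einv (Efam (Einv 𝒜))) = Efam (Einv 𝒜) :=
  (Efam_mono (Einv_mono (Efam_Einv_subset 𝒜))).antisymm
    (Efam_mono (subset_Einv_Efam fun _ hf => hf.1))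

lemma IsEFilter.subset_Efam_Einv {𝒜 ℬ : Set (Set S)} (hℬ : IsEFilter ℬ) (h : ℬ ⊆ 𝒜) :
    ℬ ⊆ Efam (Einv 𝒜) :=
  hℬ.2 ▸ Efam_mono (Einv_mono h)

lemma inter_mem_Efam_Einv {𝒜 : Set (Set S)} (h𝒜 : ∀ A ∈ 𝒜, ∀ B ∈ 𝒜, A ∩ B ∈ 𝒜)
    {A B : Set S} (hA : A ∈ Efam (Einv 𝒜)) (hB : B ∈ Efam (Einv 𝒜)) :
    A ∩ B ∈ Efam (Einv 𝒜) := by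
  obtain ⟨f, hf, ε, hε, rfl⟩ := hA
  obtain ⟨g, hg, δ, hδ, rfl⟩ := hB
  obtain ⟨m, hm, hmx⟩ := BoundedContinuousFunction.exists_mem_apply_eq_max_norm
    (A := lmcStarSubalgebra S) (Subalgebra.smul_mem _ hf.1 (ε⁻¹ : ℂ))
    (Subalgebra.smul_mem _ hg.1 (δ⁻¹ : ℂ))
  have hEm : ∀ σ, Eset σ m = Eset (σ * ε) f ∩ Eset (σ * δ) g := by
    intro σ
    rw [Eset_eq_of_apply_eq_ofReal (fun x => le_max_of_le_left (norm_nonneg _)) hmx]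
    ext x
    simp [Eset, abs_of_pos hε, abs_of_pos hδ, inv_mul_le_iff₀ hε, inv_mul_le_iff₀ hδ, mul_comm]
  refine ⟨m, ⟨hm, fun σ hσ => ?_⟩, 1, one_pos, by rw [hEm, one_mul, one_mul]⟩
  rw [hEm]
  exact h𝒜 _ (hf.2 _ (by positivity)) _ (hg.2 _ (by positivity))

lemma mem_Efam_Einv_of_subset {𝒜 : Set (Set S)}
    (h𝒜 : ∀ A ∈ 𝒜, ∀ B : Set S, IsZeroSet B → A ⊆ B → B ∈ 𝒜)
    {A B : Set S} (hA : A ∈ Efam (Einv 𝒜)) (hB : IsZeroSet B) (hAB : A ⊆ B) :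
    B ∈ Efam (Einv 𝒜) := by
  obtain ⟨f, hf, ε, hε, rfl⟩ := hA
  obtain ⟨g, hg, rfl⟩ := hB
  obtain ⟨u, hu, hux⟩ := BoundedContinuousFunction.exists_mem_apply_eq_comp
    (A := lmcStarSubalgebra S) hf.1 (φ := fun z => ((min (‖z‖ / ε) 1 : ℝ) : ℂ)) (by fun_prop)
  obtain ⟨v, hv, hvx⟩ := BoundedContinuousFunction.exists_mem_apply_eq_comp
    (A := lmcStarSubalgebra S) hg (φ := fun z => ((‖z‖ : ℝ) : ℂ)) (by fun_prop)
  have hm : u + v ∈ Lmc S := add_mem hu hv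
  -- The witness is `min(|f|/ε, 1) + |g|`; its `E_1`-set is `Z(g)` because `|f| > ε` off `Z(g)`.
  have hEm := Eset_eq_of_apply_eq_ofReal (m := u + v)
    (r := fun x => min (‖f x‖ / ε) 1 + ‖g x‖) (fun x => by positivity)
    (fun x => by simp [hux, hvx])
  refine ⟨u + v, ⟨hm, fun σ hσ => ?_⟩, 1, one_pos, ?_⟩
  · refine h𝒜 _ (hf.2 (min σ 1 * ε) (by positivity)) _ (Eset_isZeroSet hm σ) fun x hx => ?_
    have hfx : ‖f x‖ / ε ≤ min σ 1 := (div_le_iff₀ hε).2 hx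
    have hgx : g x = 0 := hAB (hfx.trans (min_le_right σ 1) |> (div_le_one hε).1)
    rw [hEm]
    show min (‖f x‖ / ε) 1 + ‖g x‖ ≤ σ
    rw [hgx, norm_zero, add_zero]
    exact (min_le_left _ _).trans (hfx.trans (min_le_left σ 1))
  · rw [hEm]
    ext x
    change g x = 0 ↔ min (‖f x‖ / ε) 1 + ‖g x‖ ≤ 1
    constructor
    · intro hgx
      rw [hgx, norm_zero, add_zero]
      exact min_le_right _ _
    · intro hx
      by_contra hgx
      have hfx : 1 < ‖f x‖ / ε := (one_lt_div hε).2 (not_le.1 fun h => hgx (hAB h))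
      have hg_pos : 0 < ‖g x‖ := norm_pos_iff.2 hgx
      rw [min_eq_right hfx.le] at hx
      linarith

lemma IsZFilter.Efam_Einv {𝒜 : Set (Set S)} (h𝒜 : IsZFilter 𝒜) :
    IsZFilter (Efam (Einv 𝒜)) where
  zero_sets := by
    rintro A ⟨f, hf, ε, -, rfl⟩
    exact Eset_isZeroSet hf.1 ε
  not_empty_mem h := h𝒜.not_empty_mem (Efam_Einv_subset 𝒜 h)
  univ_mem := ⟨0, ⟨zero_mem (lmcStarSubalgebra S), fun σ hσ => by
    rw [Eset_zero hσ.le]; exact h𝒜.univ_mem⟩, 1, one_pos, (Eset_zero zero_le_one).symm⟩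
  inter_mem _ hA _ hB := inter_mem_Efam_Einv h𝒜.inter_mem hA hB
  superset_mem _ hA _ hB hAB := mem_Efam_Einv_of_subset h𝒜.superset_mem hA hB hAB

end EFilter

theorem stmt13_general {S : Type*} [TopologicalSpace S] [Semigroup S]
    [SemitopologicalSemigroup S] (𝒜 : Set (Set S)) (h𝒜 : IsZFilter 𝒜) :
    IsEFilter (Efam (Einv 𝒜)) ∧ Efam (Einv 𝒜) ⊆ 𝒜 ∧
    ∀ ℬ : Set (Set S), IsEFilter ℬ → ℬ ⊆ 𝒜 → ℬ ⊆ Efam (Einv 𝒜) :=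
  ⟨⟨h𝒜.Efam_Einv, Efam_Einv_Efam_Einv 𝒜⟩, Efam_Einv_subset 𝒜,
    fun _ hℬ h => hℬ.subset_Efam_Einv h⟩

theorem stmt13 {S : Type*} [TopologicalSpace S] [T2Space S] [Semigroup S]
    [SemitopologicalSemigroup S] (𝒜 : Set (Set S)) (h𝒜 : IsZFilter 𝒜) :
    IsEFilter (Efam (Einv 𝒜)) ∧ Efam (Einv 𝒜) ⊆ 𝒜 ∧
    ∀ ℬ : Set (Set S), IsEFilter ℬ → ℬ ⊆ 𝒜 → ℬ ⊆ Efam (Einv 𝒜) :=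
  stmt13_general 𝒜 h𝒜
end
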